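/- Let τ be an indeterminate and work with Laurent polynomials in u over ℤ[τ, τ^{−1}]. For all integers ℓ ≥ 1, m ≥ 1 and p̃ ≥ 0, the following two constant-term evaluations hold: (i) the coefficient of u^0 in (1 + τ·u) · u^{ℓ−m+p̃} · (τ + u)^{ℓ+p̃} · (τ + u^{−1})^{m+p̃} equals Σ_{r=ℓ}^{2m} τ^{p̃+2m+2ℓ−2r} · C(ℓ+p̃, r−ℓ) · C(m+p̃+1, 2m−r); (ii) the coefficient of u^0 in (1 + τ^{−1}·u) · u^{ℓ−m+p̃} · (τ + u)^{ℓ+p̃} · (τ + u^{−1})^{m+p̃} equals Σ_{r=ℓ}^{2m} τ^{p̃+2m+2ℓ−2r} · C(ℓ+p̃+1, r−ℓ) · C(m+p̃, 2m−r), negative powers of τ being interpreted in ℤ[τ, τ^{−1}]. -/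

import Mathlib

/-!
Expanding both binomials, the constant term of `u^k (τ+u)^a (τ+u⁻¹)^b` is
`∑ᵢ C(a,i) C(b,i+k) τ^(a+b-2i-k)`, whose summands are `ctTerm a b k i`. The factor
`1 + τ^(±1) u` splits each left-hand side into two such constant terms, for `k = ℓ-m+p̃` and
`k+1`; on the right-hand side, Pascal's rule applied to the binomial with the `+1`, together with
`C(b,j) = C(b,b-j)`, produces the same two sums after the substitution `i = r-ℓ` (and
`i = r-ℓ-1` for the `τ⁻¹`-term).
-/

open LaurentPolynomial Finset

/-- Binomial coefficient `C(a,b)` for integer arguments, equal to `0` if `b < 0` or `b > a`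
    (for `a ≥ 0`). -/
def intChoose (a b : ℤ) : ℤ := if 0 ≤ b then (a.toNat.choose b.toNat : ℤ) else 0

lemma intChoose_of_neg (a : ℤ) {k : ℤ} (hk : k < 0) : intChoose a k = 0 := by
  simp [intChoose, hk.not_ge]

lemma intChoose_of_lt {a : ℕ} {k : ℤ} (hk : (a : ℤ) < k) : intChoose a k = 0 := by
  rw [intChoose, if_pos (by omega), Int.toNat_natCast,
    Nat.choose_eq_zero_of_lt (by omega), Nat.cast_zero]

lemma intChoose_natCast (a i : ℕ) : intChoose a i = a.choose i := by
  simp [intChoose]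

lemma nonneg_and_le_of_intChoose_ne_zero {a : ℕ} {k : ℤ} (h : intChoose a k ≠ 0) :
    0 ≤ k ∧ k ≤ a := by
  by_contra! hk
  by_cases hk0 : 0 ≤ k
  · exact h (intChoose_of_lt (hk hk0))
  · exact h (intChoose_of_neg _ (by omega))

lemma intChoose_sub_eq (a : ℕ) (k : ℤ) : intChoose a (a - k) = intChoose a k := by
  rcases lt_or_ge k 0 with hk | hk
  · rw [intChoose_of_neg _ hk, intChoose_of_lt (by omega)]
  rcases le_or_gt k a with hka | hka
  · lift k to ℕ using hk
    rw [← Nat.cast_sub (by omega), intChoose_natCast, intChoose_natCast,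
      Nat.choose_symm (by omega)]
  · rw [intChoose_of_lt hka, intChoose_of_neg _ (by omega)]

lemma intChoose_succ (a : ℕ) (k : ℤ) :
    intChoose (a + 1) k = intChoose a (k - 1) + intChoose a k := by
  rcases lt_or_ge k 1 with hk | hk
  · rcases lt_or_ge k 0 with hk0 | hk0
    · simp [intChoose_of_neg _ hk0, intChoose_of_neg _ (by omega : k - 1 < 0)]
    · obtain rfl : k = 0 := by omega
      simp [intChoose]
  · lift k to ℕ using (by omega)
    obtain ⟨j, rfl⟩ : ∃ j, k = j + 1 := ⟨k - 1, by omega⟩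
    rw [show ((a : ℤ) + 1) = ((a + 1 : ℕ) : ℤ) by push_cast; rfl, intChoose_natCast,
      show ((j + 1 : ℕ) : ℤ) - 1 = j by push_cast; ring, intChoose_natCast, intChoose_natCast,
      Nat.choose_succ_succ]
    push_cast; rfl

lemma C_add_T_pow {R : Type*} [CommSemiring R] (x : R) (σ : ℤ) (n : ℕ) :
    (C x + T σ) ^ n = ∑ i ∈ range (n + 1), C (x ^ (n - i) * n.choose i) * T (i * σ) := by
  rw [add_comm, add_pow]
  refine sum_congr rfl fun i _ => ?_
  rw [T_pow, map_mul, map_pow, map_natCast]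
  ring

lemma coeff_C_mul_T {R : Type*} [Semiring R] (r : R) (n k : ℤ) :
    (C r * T n).coeff k = if n = k then r else 0 := by
  rw [← single_eq_C_mul_T, AddMonoidAlgebra.coeff_single, Finsupp.single_apply]

local notation "τ" => (T 1 : LaurentPolynomial ℤ)

lemma coeff_C_T_one_add_T_one_pow (a : ℕ) (n : ℤ) :
    ((C τ + T 1) ^ a).coeff n = C (intChoose a n) * T (a - n) := by
  simp only [C_add_T_pow, mul_one, AddMonoidAlgebra.coeff_sum, Finsupp.coe_finsetSum,
    Finset.sum_apply, coeff_C_mul_T]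
  rcases lt_or_ge n 0 with hn | hn
  · rw [intChoose_of_neg _ hn, map_zero, zero_mul]
    exact sum_eq_zero fun i _ => if_neg (by omega)
  lift n to ℕ using hn
  simp only [Nat.cast_inj, sum_ite_eq', mem_range, intChoose_natCast]
  split_ifs with hna
  · rw [T_pow, mul_one, mul_comm, ← Nat.cast_sub (by omega)]; simp
  · simp [Nat.choose_eq_zero_of_lt (by omega : a < n)]

noncomputable def ctTerm (a b : ℕ) (k i : ℤ) : LaurentPolynomial ℤ :=
  C (intChoose a i * intChoose b (i + k)) * T (a + b - 2 * i - k)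

lemma bounds_of_ctTerm_ne_zero {a b : ℕ} {k i : ℤ} (h : ctTerm a b k i ≠ 0) :
    0 ≤ i ∧ i ≤ a ∧ 0 ≤ i + k ∧ i + k ≤ b := by
  have hprod : intChoose a i * intChoose b (i + k) ≠ 0 := by
    rintro h0; exact h (by rw [ctTerm, h0, map_zero, zero_mul])
  have := nonneg_and_le_of_intChoose_ne_zero (left_ne_zero_of_mul hprod)
  have := nonneg_and_le_of_intChoose_ne_zero (right_ne_zero_of_mul hprod)
  omega

lemma finsum_eq_sum_Icc_sub {M : Type*} [AddCommMonoid M] (g : ℤ → M) (c : ℤ) (L H : ℕ)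
    (hg : ∀ i, g i ≠ 0 → L ≤ i + c ∧ i + c ≤ H) :
    ∑ᶠ i, g i = ∑ r ∈ Icc L H, g (r - c) := by
  rw [finsum_eq_sum_of_support_subset g
    (s := (Icc L H).image (fun r : ℕ => (r : ℤ) - c))]
  · exact sum_image fun r _ r' _ h => by simpa using h
  · intro i hi
    obtain ⟨hL, hH⟩ := hg i hi
    simp only [coe_image, coe_Icc, Set.mem_image, Set.mem_Icc]
    exact ⟨(i + c).toNat, by omega, by omega⟩

theorem coeff_zero_T_mul_pow_mul_pow (k : ℤ) (a b : ℕ) :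
    (T k * (C τ + T 1) ^ a * (C τ + T (-1)) ^ b).coeff 0 = ∑ᶠ i, ctTerm a b k i := by
  have hsum : (T k * (C τ + T 1) ^ a * (C τ + T (-1)) ^ b).coeff 0
      = ∑ j ∈ Icc 0 b, ctTerm a b k (j - k) := by
    rw [C_add_T_pow _ (-1), ← Nat.range_succ_eq_Icc_zero, mul_sum, AddMonoidAlgebra.coeff_sum,
      Finsupp.coe_finsetSum, Finset.sum_apply]
    refine sum_congr rfl fun j hj => ?_
    rw [← single_eq_C_mul_T, AddMonoidAlgebra.coeff_mul_single_apply, T,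
      AddMonoidAlgebra.coeff_single_mul_apply]
    have hjb : j ≤ b := Nat.lt_succ_iff.mp (mem_range.mp hj)
    rw [coeff_C_T_one_add_T_one_pow, T_pow, ctTerm, sub_add_cancel, intChoose_natCast,
      show -k + (0 + -((j : ℤ) * -1)) = j - k by ring,
      show (a : ℤ) + b - 2 * (j - k) - k = a - (j - k) + (b - j : ℕ) * 1 by
        push_cast [hjb]; ring,
      T_add, map_mul, map_natCast]
    ring
  refine hsum.trans (finsum_eq_sum_Icc_sub _ k 0 b fun i hi => ?_).symm
  have := bounds_of_ctTerm_ne_zero hi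
  omega

lemma ctTerm_add_T_one_mul_ctTerm (a b : ℕ) (s i : ℤ) :
    ctTerm a b s i + τ * ctTerm a b (s + 1) i
      = C (intChoose a i * intChoose (b + 1) (b - s - i)) * T (a + b - 2 * i - s) := by
  rw [ctTerm, ctTerm, intChoose_succ, ← intChoose_sub_eq b (i + s),
    ← intChoose_sub_eq b (i + (s + 1)), show (b : ℤ) - (i + (s + 1)) = b - s - i - 1 by ring,
    show (b : ℤ) - (i + s) = b - s - i by ring, mul_left_comm, ← T_add, mul_add, map_add,
    add_mul, add_comm]
  ring_nf

lemma ctTerm_add_T_neg_one_mul_ctTerm (a b : ℕ) (s i : ℤ) :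
    ctTerm a b s i + T (-1) * ctTerm a b (s + 1) (i - 1)
      = C (intChoose (a + 1) i * intChoose b (b - s - i)) * T (a + b - 2 * i - s) := by
  rw [ctTerm, ctTerm, intChoose_succ, ← intChoose_sub_eq b (i + s),
    ← intChoose_sub_eq b (i - 1 + (s + 1)),
    show (b : ℤ) - (i - 1 + (s + 1)) = b - s - i by ring,
    show (b : ℤ) - (i + s) = b - s - i by ring, mul_left_comm, ← T_add, add_mul, map_add,
    add_mul, add_comm]
  ring_nf

lemma coeff_zero_one_add_C_mul_T_one_mul {R : Type*} [CommSemiring R] (x : R) (s : ℤ)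
    (f g : LaurentPolynomial R) :
    ((1 + C x * T 1) * T s * f * g).coeff 0
      = (T s * f * g).coeff 0 + x * (T (s + 1) * f * g).coeff 0 := by
  have hsplit : (1 + C x * T 1) * T s * f * g = T s * f * g + C x * (T (s + 1) * f * g) := by
    rw [T_add]; ring
  rw [hsplit, AddMonoidAlgebra.coeff_add, Finsupp.add_apply, ← single_eq_C,
    AddMonoidAlgebra.coeff_single_mul_apply, neg_zero, zero_add]

theorem even_size_constant_terms_Splus_Sminus_general (ℓ m ptil : ℕ) :
    (((1 + LaurentPolynomial.C (LaurentPolynomial.T (1 : ℤ)) * LaurentPolynomial.T 1) *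
            LaurentPolynomial.T ((ℓ : ℤ) - (m : ℤ) + (ptil : ℤ)) *
            (LaurentPolynomial.C (LaurentPolynomial.T (1 : ℤ)) +
                LaurentPolynomial.T 1) ^ (ℓ + ptil) *
            (LaurentPolynomial.C (LaurentPolynomial.T (1 : ℤ)) +
                LaurentPolynomial.T (-1)) ^ (m + ptil) :
          LaurentPolynomial (LaurentPolynomial ℤ)).coeff 0 =
        ∑ r ∈ Finset.Icc ℓ (2 * m),
          LaurentPolynomial.C
              (intChoose ((ℓ : ℤ) + (ptil : ℤ)) ((r : ℤ) - (ℓ : ℤ)) *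
                intChoose ((m : ℤ) + (ptil : ℤ) + 1) (2 * (m : ℤ) - (r : ℤ))) *
            LaurentPolynomial.T
              ((ptil : ℤ) + 2 * (m : ℤ) + 2 * (ℓ : ℤ) - 2 * (r : ℤ))) ∧
      (((1 + LaurentPolynomial.C (LaurentPolynomial.T (-1 : ℤ)) * LaurentPolynomial.T 1) *
            LaurentPolynomial.T ((ℓ : ℤ) - (m : ℤ) + (ptil : ℤ)) *
            (LaurentPolynomial.C (LaurentPolynomial.T (1 : ℤ)) +
                LaurentPolynomial.T 1) ^ (ℓ + ptil) *
            (LaurentPolynomial.C (LaurentPolynomial.T (1 : ℤ)) +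
                LaurentPolynomial.T (-1)) ^ (m + ptil) :
          LaurentPolynomial (LaurentPolynomial ℤ)).coeff 0 =
        ∑ r ∈ Finset.Icc ℓ (2 * m),
          LaurentPolynomial.C
              (intChoose ((ℓ : ℤ) + (ptil : ℤ) + 1) ((r : ℤ) - (ℓ : ℤ)) *
                intChoose ((m : ℤ) + (ptil : ℤ)) (2 * (m : ℤ) - (r : ℤ))) *
            LaurentPolynomial.T
              ((ptil : ℤ) + 2 * (m : ℤ) + 2 * (ℓ : ℤ) - 2 * (r : ℤ))) := by
  have coeff_zero_eq_sum (k c : ℤ) (hk : ∀ i : ℤ, i + k ≤ m + ptil → i + c ≤ 2 * m)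
      (hc : ℓ ≤ c) :
      (T k * (C τ + T 1) ^ (ℓ + ptil) * (C τ + T (-1)) ^ (m + ptil)).coeff 0
        = ∑ r ∈ Icc ℓ (2 * m), ctTerm (ℓ + ptil) (m + ptil) k (r - c) := by
    rw [coeff_zero_T_mul_pow_mul_pow, finsum_eq_sum_Icc_sub _ c]
    intro i hi
    have := bounds_of_ctTerm_ne_zero hi
    push_cast at this
    exact ⟨by omega, hk i this.2.2.2⟩
  constructor
  · rw [coeff_zero_one_add_C_mul_T_one_mul, coeff_zero_eq_sum _ ℓ (by omega) le_rfl,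
      coeff_zero_eq_sum _ ℓ (by omega) le_rfl, mul_sum, ← sum_add_distrib]
    refine sum_congr rfl fun r _ => ?_
    rw [ctTerm_add_T_one_mul_ctTerm]
    push_cast
    congr 1
    · congr 3; omega
    · congr 1; omega
  · rw [coeff_zero_one_add_C_mul_T_one_mul, coeff_zero_eq_sum _ ℓ (by omega) le_rfl,
      coeff_zero_eq_sum _ (ℓ + 1) (by omega) (by omega), mul_sum, ← sum_add_distrib]
    refine sum_congr rfl fun r _ => ?_
    rw [sub_add_eq_sub_sub, ctTerm_add_T_neg_one_mul_ctTerm]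
    push_cast
    congr 1
    · congr 3; omega
    · congr 1; omega

/-- Entrywise constant-term evaluations for the even-size partial sums at `t = τ` and
    `t = τ⁻¹`: for Laurent polynomials in `u` over `ℤ[τ,τ⁻¹]`,
    (i) the coefficient of `u^0` in `(1 + τu) u^{ℓ-m+p̃} (τ+u)^{ℓ+p̃} (τ+u⁻¹)^{m+p̃}` equals
    `∑_{r=ℓ}^{2m} τ^{p̃+2m+2ℓ-2r} C(ℓ+p̃, r-ℓ) C(m+p̃+1, 2m-r)`, and
    (ii) the coefficient of `u^0` in `(1 + τ⁻¹u) u^{ℓ-m+p̃} (τ+u)^{ℓ+p̃} (τ+u⁻¹)^{m+p̃}` equals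
    `∑_{r=ℓ}^{2m} τ^{p̃+2m+2ℓ-2r} C(ℓ+p̃+1, r-ℓ) C(m+p̃, 2m-r)`. -/
theorem even_size_constant_terms_Splus_Sminus (ℓ m ptil : ℕ) (hℓ : 1 ≤ ℓ) (hm : 1 ≤ m) :
    (((1 + LaurentPolynomial.C (LaurentPolynomial.T (1 : ℤ)) * LaurentPolynomial.T 1) *
            LaurentPolynomial.T ((ℓ : ℤ) - (m : ℤ) + (ptil : ℤ)) *
            (LaurentPolynomial.C (LaurentPolynomial.T (1 : ℤ)) +
                LaurentPolynomial.T 1) ^ (ℓ + ptil) *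
            (LaurentPolynomial.C (LaurentPolynomial.T (1 : ℤ)) +
                LaurentPolynomial.T (-1)) ^ (m + ptil) :
          LaurentPolynomial (LaurentPolynomial ℤ)).coeff 0 =
        ∑ r ∈ Finset.Icc ℓ (2 * m),
          LaurentPolynomial.C
              (intChoose ((ℓ : ℤ) + (ptil : ℤ)) ((r : ℤ) - (ℓ : ℤ)) *
                intChoose ((m : ℤ) + (ptil : ℤ) + 1) (2 * (m : ℤ) - (r : ℤ))) *
            LaurentPolynomial.T
              ((ptil : ℤ) + 2 * (m : ℤ) + 2 * (ℓ : ℤ) - 2 * (r : ℤ))) ∧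
      (((1 + LaurentPolynomial.C (LaurentPolynomial.T (-1 : ℤ)) * LaurentPolynomial.T 1) *
            LaurentPolynomial.T ((ℓ : ℤ) - (m : ℤ) + (ptil : ℤ)) *
            (LaurentPolynomial.C (LaurentPolynomial.T (1 : ℤ)) +
                LaurentPolynomial.T 1) ^ (ℓ + ptil) *
            (LaurentPolynomial.C (LaurentPolynomial.T (1 : ℤ)) +
                LaurentPolynomial.T (-1)) ^ (m + ptil) :
          LaurentPolynomial (LaurentPolynomial ℤ)).coeff 0 =
        ∑ r ∈ Finset.Icc ℓ (2 * m),
          LaurentPolynomial.C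
              (intChoose ((ℓ : ℤ) + (ptil : ℤ) + 1) ((r : ℤ) - (ℓ : ℤ)) *
                intChoose ((m : ℤ) + (ptil : ℤ)) (2 * (m : ℤ) - (r : ℤ))) *
            LaurentPolynomial.T
              ((ptil : ℤ) + 2 * (m : ℤ) + 2 * (ℓ : ℤ) - 2 * (r : ℤ))) :=
  even_size_constant_terms_Splus_Sminus_general ℓ m ptil
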